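/- The variation of information is the minimum-entropy-weight partition distance: for all partitions P, Q of Fin n (n ≥ 1), δ_e(P,Q) = VI(P,Q) = 2·e(P ⊓ Q) − e(P) − e(Q), where δ_e is the minimum-weight walk distance in the Hasse-diagram graph with edge weights given by differences of the entropy e. -/

import Mathlib

open scoped BigOperators

/-- Entropy of a partition (binary logarithm):
`e(P) = -∑_{A block of P} (|A|/n) · log₂(|A|/n)`. -/
noncomputable def entropy (n : ℕ) (P : Setoid (Fin n)) : ℝ :=
  - ∑ᶠ A ∈ P.classes, ((A.ncard : ℝ) / n) * Real.logb 2 ((A.ncard : ℝ) / n)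

/-- Variation of information: `VI(P,Q) = 2 e(P ⊓ Q) - e(P) - e(Q)`. -/
noncomputable def VI (n : ℕ) (P Q : Setoid (Fin n)) : ℝ :=
  2 * entropy n (P ⊓ Q) - entropy n P - entropy n Q

/-- The Hasse-diagram graph of the partition lattice: `P` and `Q` are adjacent
iff one covers the other. -/
def hasse (n : ℕ) : SimpleGraph (Setoid (Fin n)) where
  Adj P Q := P ⋖ Q ∨ Q ⋖ P
  symm := ⟨fun P Q h => h.symm⟩
  loopless := ⟨fun P h => by cases h with
    | inl h => exact lt_irrefl P h.lt
    | inr h => exact lt_irrefl P h.lt⟩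

/-- The weight of an edge `{P,Q}` induced by `f`: `|f(P) - f(Q)|`. -/
noncomputable def eWeight {n : ℕ} (f : Setoid (Fin n) → ℝ) : Sym2 (Setoid (Fin n)) → ℝ :=
  Sym2.lift ⟨fun P Q => |f P - f Q|, fun P Q => abs_sub_comm (f P) (f Q)⟩

/-- The weight of a walk in the Hasse diagram: the sum of its edge weights. -/
noncomputable def walkWeight {n : ℕ} (f : Setoid (Fin n) → ℝ) {P Q : Setoid (Fin n)}
    (W : (hasse n).Walk P Q) : ℝ :=
  (W.edges.map (eWeight f)).sum

/-- The minimum-`f`-weight distance `δ_f(P,Q)`: the minimum weight of a walk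
from `P` to `Q` in the Hasse diagram. -/
noncomputable def deltaW {n : ℕ} (f : Setoid (Fin n) → ℝ) (P Q : Setoid (Fin n)) : ℝ :=
  sInf {w : ℝ | ∃ W : (hasse n).Walk P Q, walkWeight f W = w}

/-!
Going down a maximal chain from `P` to `P ⊓ Q` and up to `Q` is a walk of weight `VI(P,Q)`,
because entropy is antitone and the weights telescope along monotone walks. Conversely,
`VI(·,Q)` changes by at most `|e(P) - e(R)|` across an edge `{P,R}`. For `P ≤ R` this is the
monotonicity of conditional entropy, `e(Q ⊓ P) - e(P) ≤ e(Q ⊓ R) - e(R)`, which after writing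
`e(P) = log n - (1/n) ∑ₓ log |[x]_P|` reduces via `log t ≤ t - 1` to the counting inequality
`∑ₓ |[x]_{Q⊓T}| |[x]_S| / (|[x]_T| |[x]_{Q⊓S}|) ≤ n` for `S ≤ T`.
-/

open Finset Classical

instance Setoid.instFinite {α : Type*} [Finite α] : Finite (Setoid α) :=
  Finite.of_injective (fun P : Setoid α => P.r) fun _ _ h =>
    Setoid.ext fun x y => iff_of_eq (congr_fun₂ h x y)

section Counting

variable {α : Type*} [Fintype α]

noncomputable def blockCard (P : Setoid α) (x : α) : ℕ := #{y | P y x}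

lemma blockCard_pos (P : Setoid α) (x : α) : 0 < blockCard P x :=
  card_pos.mpr ⟨x, mem_filter.mpr ⟨mem_univ x, P.refl x⟩⟩

lemma blockCard_congr (P : Setoid α) {x y : α} (h : P x y) : blockCard P x = blockCard P y := by
  unfold blockCard
  congr 1
  ext z
  simpa using ⟨fun hz => P.trans hz h, fun hz => P.trans hz (P.symm h)⟩

lemma sum_blockCard_mul (P : Setoid α) (s : Finset α) (g : α → ℝ) :
    ∑ x ∈ s, (blockCard P x : ℝ) * g x = ∑ y, ∑ x ∈ s with P y x, g x := by
  simp only [blockCard, card_filter, Nat.cast_sum, sum_mul, sum_filter]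
  rw [sum_comm]
  simp

lemma sum_inv_blockCard_le_one (P : Setoid α) (s : Finset α)
    (hs : ∀ x ∈ s, ∀ y ∈ s, P x y) :
    ∑ x ∈ s, (blockCard P x : ℝ)⁻¹ ≤ 1 := by
  obtain rfl | ⟨x₀, hx₀⟩ := s.eq_empty_or_nonempty
  · simp
  have hsub : s ⊆ ({y | P y x₀} : Finset α) := fun y hy =>
    mem_filter.mpr ⟨mem_univ y, hs y hy x₀ hx₀⟩
  rw [sum_congr rfl fun y hy => by rw [blockCard_congr P (hs y hy x₀ hx₀)], sum_const,
    nsmul_eq_mul, ← div_eq_mul_inv, div_le_one (by exact_mod_cast blockCard_pos P x₀)]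
  exact_mod_cast card_le_card hsub

variable (Q : Setoid α) {S T : Setoid α}

lemma sum_blockCard_div_le_one (hST : S ≤ T) (y : α) :
    ∑ x ∈ univ.filter ((Q ⊓ T) y ·),
      (blockCard S x : ℝ) / (blockCard T x * blockCard (Q ⊓ S) x) ≤ 1 := by
  set s := univ.filter ((Q ⊓ T) y ·)
  have hT : ∀ x ∈ s, blockCard T x = blockCard T y := fun x hx =>
    blockCard_congr T (T.symm (mem_filter.mp hx).2.2)
  -- The `x` with `(Q ⊓ T) y x` and `S z x` lie in one `Q ⊓ S`-block, and exist only if `T z y`.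
  have hzero : ∀ z, ∑ x ∈ s with S z x, ((blockCard T y : ℝ) * blockCard (Q ⊓ S) x)⁻¹ ≠ 0 →
      T z y := by
    intro z hz
    obtain ⟨x, hx, -⟩ := exists_ne_zero_of_sum_ne_zero hz
    obtain ⟨hxs, hzx⟩ := mem_filter.mp hx
    exact T.trans (hST hzx) (T.symm (mem_filter.mp hxs).2.2)
  have hblock : ∀ z, ∑ x ∈ s with S z x, ((blockCard T y : ℝ) * blockCard (Q ⊓ S) x)⁻¹
      ≤ (blockCard T y : ℝ)⁻¹ := by
    intro z
    simp only [mul_inv, ← mul_sum]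
    refine mul_le_of_le_one_right (by positivity) (sum_inv_blockCard_le_one _ _ ?_)
    simp only [s, mem_filter, mem_univ, true_and]
    exact fun x ⟨⟨hqx, _⟩, hzx⟩ x' ⟨⟨hqx', _⟩, hzx'⟩ =>
      ⟨Q.trans (Q.symm hqx) hqx', S.trans (S.symm hzx) hzx'⟩
  calc ∑ x ∈ s, (blockCard S x : ℝ) / (blockCard T x * blockCard (Q ⊓ S) x)
      = ∑ x ∈ s, (blockCard S x : ℝ) * ((blockCard T y : ℝ) * blockCard (Q ⊓ S) x)⁻¹ :=
        sum_congr rfl fun x hx => by rw [hT x hx, div_eq_mul_inv]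
    _ = ∑ z with T z y,
          ∑ x ∈ s with S z x, ((blockCard T y : ℝ) * blockCard (Q ⊓ S) x)⁻¹ := by
        rw [sum_blockCard_mul, sum_filter_of_ne fun z _ => hzero z]
    _ ≤ ∑ z with T z y, (blockCard T y : ℝ)⁻¹ := sum_le_sum fun z _ => hblock z
    _ = 1 := by
        rw [sum_const, nsmul_eq_mul, ← blockCard, mul_inv_cancel₀]
        exact_mod_cast (blockCard_pos T y).ne'

lemma sum_blockCard_ratio_le_card (hST : S ≤ T) :
    ∑ x, (blockCard (Q ⊓ T) x * blockCard S x : ℝ) / (blockCard T x * blockCard (Q ⊓ S) x)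
      ≤ Fintype.card α := by
  simp only [mul_div_assoc, sum_blockCard_mul]
  simpa using sum_le_sum fun y (_ : y ∈ univ) => sum_blockCard_div_le_one Q hST y

end Counting

lemma blockCard_eq_ncard {α : Type*} [Fintype α] (P : Setoid α) (x : α) :
    blockCard P x = {y | P y x}.ncard := by
  rw [blockCard, Set.ncard_eq_toFinset_card', Set.toFinset_ofPred]

lemma entropy_eq_sum_blockCard (n : ℕ) (P : Setoid (Fin n)) :
    entropy n P = -∑ x, Real.logb 2 (blockCard P x / n) / n := by
  have hfin : P.classes.Finite := Set.toFinite _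
  have hmaps : ∀ x ∈ (univ : Finset (Fin n)), {y | P y x} ∈ hfin.toFinset := fun x _ =>
    hfin.mem_toFinset.mpr (P.mem_classes x)
  rw [entropy, finsum_mem_eq_finite_toFinset_sum _ hfin, ← sum_fiberwise_of_maps_to hmaps]
  congr 1
  refine sum_congr rfl fun A hA => ?_
  obtain ⟨x₀, rfl⟩ := hfin.mem_toFinset.mp hA
  have hfiber : univ.filter (fun x => {y | P y x} = {y | P y x₀}) = univ.filter (P · x₀) := by
    ext x
    simp only [mem_filter, mem_univ, true_and]
    refine ⟨fun h => (h ▸ P.refl x : x ∈ {y | P y x₀}), fun h => ?_⟩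
    ext z
    exact ⟨fun hz => P.trans hz h, fun hz => P.trans hz (P.symm h)⟩
  rw [hfiber, sum_congr rfl fun x hx => by rw [blockCard_congr P (mem_filter.mp hx).2],
    sum_const, nsmul_eq_mul, ← blockCard, blockCard_eq_ncard]
  ring

lemma entropy_eq_logb_sub (n : ℕ) (P : Setoid (Fin n)) :
    entropy n P = Real.logb 2 n - (∑ x, Real.logb 2 (blockCard P x)) / n := by
  rw [entropy_eq_sum_blockCard]
  obtain rfl | hn := n.eq_zero_or_pos
  · simp
  have hn' : (n : ℝ) ≠ 0 := by positivity
  simp only [Real.logb_div (Nat.cast_ne_zero.mpr (blockCard_pos P _).ne') hn', sub_div,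
    sum_sub_distrib, sum_const, card_univ, Fintype.card_fin, nsmul_eq_mul, ← sum_div]
  field_simp
  ring

lemma Real.sum_log_nonpos_of_sum_le_card {ι : Type*} (s : Finset ι) {w : ι → ℝ}
    (hw : ∀ i ∈ s, 0 < w i) (hsum : ∑ i ∈ s, w i ≤ #s) :
    ∑ i ∈ s, Real.log (w i) ≤ 0 :=
  calc ∑ i ∈ s, Real.log (w i)
      ≤ ∑ i ∈ s, (w i - 1) := sum_le_sum fun i hi => Real.log_le_sub_one_of_pos (hw i hi)
    _ = ∑ i ∈ s, w i - #s := by simp [sum_sub_distrib]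
    _ ≤ 0 := sub_nonpos.mpr hsum

/-- Conditioning on a finer partition decreases conditional entropy: `H(Q | S) ≤ H(Q | T)`. -/
lemma entropy_inf_sub_entropy_le {n : ℕ} (Q : Setoid (Fin n)) {S T : Setoid (Fin n)}
    (hST : S ≤ T) : entropy n (Q ⊓ S) - entropy n S ≤ entropy n (Q ⊓ T) - entropy n T := by
  have hpos : ∀ (P : Setoid (Fin n)) x, (0 : ℝ) < blockCard P x := fun P x =>
    Nat.cast_pos.mpr (blockCard_pos P x)
  have hne : ∀ (P : Setoid (Fin n)) x, (blockCard P x : ℝ) ≠ 0 := fun P x => (hpos P x).ne'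
  set w : Fin n → ℝ := fun x =>
    (blockCard (Q ⊓ T) x * blockCard S x : ℝ) / (blockCard T x * blockCard (Q ⊓ S) x)
  have hlogb : ∀ x, Real.logb 2 (w x) = Real.logb 2 (blockCard (Q ⊓ T) x) +
      Real.logb 2 (blockCard S x) - Real.logb 2 (blockCard T x) -
      Real.logb 2 (blockCard (Q ⊓ S) x) := fun x => by
    rw [Real.logb_div (mul_ne_zero (hne _ x) (hne _ x)) (mul_ne_zero (hne _ x) (hne _ x)),
      Real.logb_mul (hne _ x) (hne _ x), Real.logb_mul (hne _ x) (hne _ x)]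
    ring
  have hgibbs : ∑ x, Real.logb 2 (w x) ≤ 0 := by
    simp only [Real.logb, ← sum_div]
    refine div_nonpos_of_nonpos_of_nonneg (Real.sum_log_nonpos_of_sum_le_card _
      (fun x _ => div_pos (mul_pos (hpos _ x) (hpos _ x)) (mul_pos (hpos _ x) (hpos _ x))) ?_)
      (Real.log_nonneg one_le_two)
    simpa using sum_blockCard_ratio_le_card Q hST
  simp only [hlogb, sum_sub_distrib, sum_add_distrib] at hgibbs
  simp only [entropy_eq_logb_sub]
  have := div_nonpos_of_nonpos_of_nonneg hgibbs (Nat.cast_nonneg (α := ℝ) n)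
  simp only [add_div, sub_div] at this
  linarith

lemma entropy_antitone (n : ℕ) : Antitone (entropy n) := fun S T hST => by
  simpa [inf_eq_left.mpr hST] using entropy_inf_sub_entropy_le S hST

section Walks

variable {n : ℕ} {f : Setoid (Fin n) → ℝ}

@[simp]
lemma walkWeight_nil {P : Setoid (Fin n)} :
    walkWeight f (SimpleGraph.Walk.nil : (hasse n).Walk P P) = 0 :=
  rfl

@[simp]
lemma walkWeight_cons {P Q R : Setoid (Fin n)} (h : (hasse n).Adj P Q) (W : (hasse n).Walk Q R) :
    walkWeight f (.cons h W) = |f P - f Q| + walkWeight f W :=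
  rfl

lemma walkWeight_append {P Q R : Setoid (Fin n)} (W : (hasse n).Walk P Q)
    (W' : (hasse n).Walk Q R) : walkWeight f (W.append W') = walkWeight f W + walkWeight f W' := by
  simp [walkWeight, SimpleGraph.Walk.edges_append]

lemma walkWeight_reverse {P Q : Setoid (Fin n)} (W : (hasse n).Walk P Q) :
    walkWeight f W.reverse = walkWeight f W := by
  simp [walkWeight, SimpleGraph.Walk.edges_reverse, List.sum_reverse]

lemma exists_walkWeight_eq_sub_of_le (hf : Antitone f) {A B : Setoid (Fin n)} (hAB : A ≤ B) :
    ∃ W : (hasse n).Walk A B, walkWeight f W = f A - f B := by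
  induction A using WellFoundedGT.induction with
  | _ A ih =>
    obtain rfl | hlt := hAB.eq_or_lt
    · exact ⟨.nil, by simp⟩
    obtain ⟨C, hAC, hCB⟩ := exists_covBy_le_of_lt hlt
    obtain ⟨W, hW⟩ := ih C hAC.lt hCB
    refine ⟨.cons (show (hasse n).Adj A C from Or.inl hAC) W, ?_⟩
    rw [walkWeight_cons, hW, abs_of_nonneg (sub_nonneg.mpr (hf hAC.le))]
    ring

end Walks

lemma VI_self (n : ℕ) (P : Setoid (Fin n)) : VI n P P = 0 := by
  rw [VI, inf_idem]
  ring

lemma VI_le_abs_sub_add_VI {n : ℕ} {P R : Setoid (Fin n)} (h : P ≤ R ∨ R ≤ P)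
    (Q : Setoid (Fin n)) : VI n P Q ≤ |entropy n P - entropy n R| + VI n R Q := by
  rcases h with h | h
  · have := entropy_inf_sub_entropy_le Q h
    rw [abs_of_nonneg (sub_nonneg.mpr (entropy_antitone n h)), VI, VI, inf_comm P, inf_comm R]
    linarith
  · have := entropy_antitone n (inf_le_inf_right Q h)
    rw [abs_of_nonpos (sub_nonpos.mpr (entropy_antitone n h)), VI, VI]
    linarith

lemma VI_le_walkWeight {n : ℕ} {P Q : Setoid (Fin n)} (W : (hasse n).Walk P Q) :
    VI n P Q ≤ walkWeight (entropy n) W := by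
  induction W with
  | nil => rw [VI_self, walkWeight_nil]
  | cons h W ih =>
    rw [walkWeight_cons]
    exact (VI_le_abs_sub_add_VI (h.imp CovBy.le CovBy.le) _).trans (by linarith)

theorem isLeast_walkWeight_entropy {n : ℕ} (P Q : Setoid (Fin n)) :
    IsLeast {w | ∃ W : (hasse n).Walk P Q, walkWeight (entropy n) W = w} (VI n P Q) := by
  refine ⟨?_, fun _ ⟨W, hW⟩ => hW ▸ VI_le_walkWeight W⟩
  have hanti := entropy_antitone n
  obtain ⟨W₁, hW₁⟩ := exists_walkWeight_eq_sub_of_le hanti (inf_le_left (b := Q))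
  obtain ⟨W₂, hW₂⟩ := exists_walkWeight_eq_sub_of_le hanti (inf_le_right (a := P))
  refine ⟨W₁.reverse.append W₂, ?_⟩
  rw [walkWeight_append, walkWeight_reverse, hW₁, hW₂, VI]
  ring

theorem deltaW_entropy_eq_VI_general (n : ℕ) (P Q : Setoid (Fin n)) :
    deltaW (entropy n) P Q = VI n P Q ∧
    VI n P Q = 2 * entropy n (P ⊓ Q) - entropy n P - entropy n Q :=
  ⟨(isLeast_walkWeight_entropy P Q).csInf_eq, rfl⟩

/-- The variation of information is the minimum-entropy-weight partition
distance: `δ_e(P,Q) = VI(P,Q) = 2 e(P ⊓ Q) - e(P) - e(Q)`. -/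
theorem deltaW_entropy_eq_VI (n : ℕ) (hn : 1 ≤ n) (P Q : Setoid (Fin n)) :
    deltaW (entropy n) P Q = VI n P Q ∧
    VI n P Q = 2 * entropy n (P ⊓ Q) - entropy n P - entropy n Q :=
  deltaW_entropy_eq_VI_general n P Q
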